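/- arXiv:2310.20571 — 2 statements merged into one kernel-verified Lean document; each statement's English description precedes it below -/
import Mathlib

section
/- Let C be an equivalence class of left weak Bruhat intervals in S_n under descent-preserving isomorphism. Then the element ξ_C := ρσ⁻¹ is the same for every interval [σ, ρ]_L ∈ C. -/
/-- The left inversion set `Inv_L(σ) = {(i,j) : i < j, σ(i) > σ(j)}`. -/
def InvL {n : ℕ} (σ : Equiv.Perm (Fin n)) : Set (Fin n × Fin n) :=
  {p | p.1 < p.2 ∧ σ p.2 < σ p.1}

/-- The left weak Bruhat order: `σ ≤_L ρ` iff `Inv_L(σ) ⊆ Inv_L(ρ)`. -/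
def lLE {n : ℕ} (σ ρ : Equiv.Perm (Fin n)) : Prop := InvL σ ⊆ InvL ρ

/-- The right inversion set `Inv_R(σ) = {(σ(i),σ(j)) : i < j, σ(i) > σ(j)}`. -/
def InvR {n : ℕ} (σ : Equiv.Perm (Fin n)) : Set (Fin n × Fin n) :=
  {p | p.2 < p.1 ∧ σ⁻¹ p.1 < σ⁻¹ p.2}

/-- The right weak Bruhat order: `σ ≤_R ρ` iff `Inv_R(σ) ⊆ Inv_R(ρ)`. -/
def rLE {n : ℕ} (σ ρ : Equiv.Perm (Fin n)) : Prop := InvR σ ⊆ InvR ρ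

/-- The left weak Bruhat interval `[σ, ρ]_L`. -/
def lInterval {n : ℕ} (σ ρ : Equiv.Perm (Fin n)) : Set (Equiv.Perm (Fin n)) :=
  {γ | lLE σ γ ∧ lLE γ ρ}

/-- The right weak Bruhat interval `[σ, ρ]_R`. -/
def rInterval {n : ℕ} (σ ρ : Equiv.Perm (Fin n)) : Set (Equiv.Perm (Fin n)) :=
  {γ | rLE σ γ ∧ rLE γ ρ}

/-- The Coxeter length of a permutation, i.e. its number of inversions. -/
def len {n : ℕ} (σ : Equiv.Perm (Fin n)) : ℕ :=
  (Finset.univ.filter fun p : Fin n × Fin n => p.1 < p.2 ∧ σ p.2 < σ p.1).card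

/-- The simple transposition `s_i` (swapping the adjacent values `i`, `i+1`). -/
def sgen {n : ℕ} (i : Fin n) : Equiv.Perm (Fin (n + 1)) :=
  Equiv.swap i.castSucc i.succ

/-- The left descent set `Des_L(σ) = {i : ℓ(s_i σ) < ℓ(σ)}`. -/
def DesL {n : ℕ} (σ : Equiv.Perm (Fin (n + 1))) : Set (Fin n) :=
  {i | len (sgen i * σ) < len σ}

/-!
Every cover of the left weak order has the form `w ⋖ s_j w`, and its label `j` is the unique
element of `Des_L(s_j w) \ Des_L(w)`. A descent-preserving poset isomorphism `f` of intervals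
therefore sends covers to covers with the same label. As `f σ₁ = σ₂`, induction on the length
gives `f γ = γ σ₁⁻¹ σ₂` for every `γ` in the interval, and `γ = ρ₁` yields `ρ₂ = ρ₁ σ₁⁻¹ σ₂`.
-/

open Equiv

section WeakOrder

variable {m : ℕ}

lemma len_eq_ncard (x : Perm (Fin m)) : len x = (InvL x).ncard := by
  rw [len, ← Set.ncard_coe_finset]
  congr 1
  ext
  simp [InvL]

lemma lLE_refl (x : Perm (Fin m)) : lLE x x := subset_rfl

lemma lLE_trans {x y z : Perm (Fin m)} (hxy : lLE x y) (hyz : lLE y z) : lLE x z :=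
  hxy.trans hyz

lemma len_le_len_of_lLE {x y : Perm (Fin m)} (h : lLE x y) : len x ≤ len y := by
  rw [len_eq_ncard, len_eq_ncard]
  exact Set.ncard_le_ncard h

lemma apply_lt_apply_of_lLE {x y : Perm (Fin m)} (h : lLE x y) {a b : Fin m} (hab : a < b)
    (hy : y a < y b) : x a < x b := by
  by_contra hx
  exact (h (show (a, b) ∈ InvL x from
    ⟨hab, lt_of_le_of_ne (not_lt.mp hx) (x.injective.ne hab.ne')⟩)).2.not_gt hy

lemma apply_lt_apply_iff_InvL (x : Perm (Fin m)) {p q : Fin m} (hpq : p ≠ q) :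
    x q < x p ↔ (q < p ∧ (q, p) ∉ InvL x) ∨ (p < q ∧ (p, q) ∈ InvL x) := by
  rcases hpq.lt_or_gt with h | h
  · simp [InvL, h, h.not_gt]
  · simp only [InvL, Set.mem_ofPred_eq, h, true_and, not_lt, h.not_gt, false_and, or_false]
    exact ⟨le_of_lt, fun hle => lt_of_le_of_ne hle (x.injective.ne h.ne)⟩

lemma InvL_injective : Function.Injective (InvL (n := m)) := by
  intro x y h
  have hmono : StrictMono (y * x⁻¹ : Perm (Fin m)) := by
    intro a b hab
    obtain ⟨p, rfl⟩ := x.surjective b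
    obtain ⟨q, rfl⟩ := x.surjective a
    have hpq : p ≠ q := by rintro rfl; exact hab.false
    simpa [apply_lt_apply_iff_InvL _ hpq, h] using hab
  exact (mul_inv_eq_one.mp (Perm.ext fun _ => hmono.apply_eq)).symm

lemma lLE_antisymm {x y : Perm (Fin m)} (hxy : lLE x y) (hyx : lLE y x) : x = y :=
  InvL_injective (hxy.antisymm hyx)

lemma eq_of_lLE_of_len_le {x y : Perm (Fin m)} (h : lLE x y) (hlen : len y ≤ len x) : x = y := by
  rw [len_eq_ncard, len_eq_ncard] at hlen
  exact InvL_injective (Set.eq_of_subset_of_ncard_le h hlen)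

lemma eq_or_eq_of_lLE_of_len_eq_succ {x y z : Perm (Fin m)} (hxz : lLE x z) (hzy : lLE z y)
    (hlen : len y = len x + 1) : z = x ∨ z = y := by
  have h₁ := len_le_len_of_lLE hxz
  have h₂ := len_le_len_of_lLE hzy
  rcases (show len z = len x ∨ len z = len y by omega) with h | h
  · exact Or.inl (eq_of_lLE_of_len_le hxz h.le).symm
  · exact Or.inr (eq_of_lLE_of_len_le hzy h.ge)

end WeakOrder

section SimpleReflections

variable {n : ℕ}

lemma sgen_mul_sgen_mul (j : Fin n) (x : Perm (Fin (n + 1))) : sgen j * (sgen j * x) = x := by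
  rw [← mul_assoc, sgen, swap_mul_self, one_mul]

lemma sgen_mul_inv_apply (j : Fin n) (x : Perm (Fin (n + 1))) (k : Fin (n + 1)) :
    (sgen j * x)⁻¹ k = x⁻¹ (sgen j k) := by
  simp [sgen, mul_inv_rev, swap_inv]

lemma sgen_lt_sgen_iff {j : Fin n} {u v : Fin (n + 1)} (h₁ : ¬(u = j.castSucc ∧ v = j.succ))
    (h₂ : ¬(u = j.succ ∧ v = j.castSucc)) : sgen j u < sgen j v ↔ u < v := by
  simp only [sgen, swap_apply_def]
  simp only [Fin.ext_iff, Fin.val_castSucc, Fin.val_succ, not_and] at h₁ h₂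
  split_ifs <;> simp only [Fin.ext_iff, Fin.lt_def, Fin.val_castSucc, Fin.val_succ] at * <;> omega

lemma InvL_sgen_mul {x : Perm (Fin (n + 1))} {j : Fin n} {a b : Fin (n + 1)} (hab : a < b)
    (ha : x a = j.castSucc) (hb : x b = j.succ) :
    InvL (sgen j * x) = insert (a, b) (InvL x) := by
  ext ⟨p, q⟩
  simp only [Set.mem_insert_iff, Prod.mk.injEq]
  by_cases hpq : p = a ∧ q = b
  · obtain ⟨rfl, rfl⟩ := hpq
    simp [InvL, hab, ha, hb, sgen]
  by_cases hqp : p = b ∧ q = a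
  · obtain ⟨rfl, rfl⟩ := hqp
    simp [InvL, hab.not_gt, hab.ne']
  have key : sgen j (x q) < sgen j (x p) ↔ x q < x p := by
    refine sgen_lt_sgen_iff ?_ ?_ <;>
      rwa [← ha, ← hb, x.injective.eq_iff, x.injective.eq_iff, and_comm]
  simp [InvL, hpq, key]

lemma len_sgen_mul {x : Perm (Fin (n + 1))} {j : Fin n} (h : x⁻¹ j.castSucc < x⁻¹ j.succ) :
    len (sgen j * x) = len x + 1 := by
  have hnot : (x⁻¹ j.castSucc, x⁻¹ j.succ) ∉ InvL x := by
    simp [InvL, Fin.castSucc_lt_succ.not_gt]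
  rw [len_eq_ncard, len_eq_ncard, InvL_sgen_mul h (by simp) (by simp),
    Set.ncard_insert_of_notMem hnot]

lemma mem_DesL_iff {w : Perm (Fin (n + 1))} {i : Fin n} :
    i ∈ DesL w ↔ w⁻¹ i.succ < w⁻¹ i.castSucc := by
  rcases (w⁻¹.injective.ne (Fin.castSucc_lt_succ (i := i)).ne).lt_or_gt with h | h
  · have := len_sgen_mul h
    simp only [DesL, Set.mem_ofPred_eq, h.not_gt, iff_false]
    omega
  · have h' : (sgen i * w)⁻¹ i.castSucc < (sgen i * w)⁻¹ i.succ := by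
      simpa [sgen_mul_inv_apply, sgen] using h
    have := len_sgen_mul h'
    rw [sgen_mul_sgen_mul] at this
    simp only [DesL, Set.mem_ofPred_eq, h, iff_true]
    omega

lemma notMem_DesL_iff {w : Perm (Fin (n + 1))} {i : Fin n} :
    i ∉ DesL w ↔ w⁻¹ i.castSucc < w⁻¹ i.succ := by
  rw [mem_DesL_iff, not_lt]
  exact (w⁻¹.injective.ne (Fin.castSucc_lt_succ (i := i)).ne).le_iff_lt

lemma sgen_apply_castSucc (j : Fin n) : sgen j j.castSucc = j.succ := swap_apply_left _ _

lemma sgen_apply_succ (j : Fin n) : sgen j j.succ = j.castSucc := swap_apply_right _ _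

lemma sgen_apply_of_ne {j : Fin n} {k : Fin (n + 1)} (h₁ : (k : ℕ) ≠ j) (h₂ : (k : ℕ) ≠ j + 1) :
    sgen j k = k :=
  swap_apply_of_ne_of_ne (Fin.ne_of_val_ne h₁) (Fin.ne_of_val_ne h₂)

lemma lLE_sgen_mul {w : Perm (Fin (n + 1))} {j : Fin n} (h : j ∉ DesL w) :
    lLE w (sgen j * w) := by
  rw [notMem_DesL_iff] at h
  rw [lLE, InvL_sgen_mul h (by simp) (by simp)]
  exact Set.subset_insert _ _

lemma mem_DesL_sgen_mul {w : Perm (Fin (n + 1))} {j : Fin n} (h : j ∉ DesL w) :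
    j ∈ DesL (sgen j * w) := by
  show len (sgen j * (sgen j * w)) < len (sgen j * w)
  rw [sgen_mul_sgen_mul, len_sgen_mul (notMem_DesL_iff.mp h)]
  omega

lemma eq_of_mem_DesL_sgen_mul {w : Perm (Fin (n + 1))} {i j : Fin n} (hj : j ∉ DesL w)
    (hi : i ∈ DesL (sgen j * w)) (hi' : i ∉ DesL w) : i = j := by
  rw [notMem_DesL_iff] at hj hi'
  rw [mem_DesL_iff, sgen_mul_inv_apply, sgen_mul_inv_apply] at hi
  by_contra hij
  have hval : (i : ℕ) ≠ j := fun h => hij (Fin.ext h)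
  by_cases hl : (i : ℕ) + 1 = j
  · have hij' : i.succ = j.castSucc := Fin.ext hl
    rw [hij', sgen_apply_castSucc, sgen_apply_of_ne (by simp; omega) (by simp; omega)] at hi
    rw [hij'] at hi'
    exact (hi.trans (hi'.trans hj)).false
  by_cases hr : (j : ℕ) + 1 = i
  · have hji : i.castSucc = j.succ := Fin.ext hr.symm
    rw [hji, sgen_apply_succ, sgen_apply_of_ne (by simp; omega) (by simp; omega)] at hi
    rw [hji] at hi'
    exact (hi.trans (hj.trans hi')).false
  rw [sgen_apply_of_ne (by simp; omega) (by simp; omega),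
    sgen_apply_of_ne (by simp; omega) (by simp; omega)] at hi
  exact hi.not_gt hi'

end SimpleReflections

/-- Take `(p, q) ∈ Inv_L(y) \ Inv_L(x)` with `y p - y q` minimal: a value strictly between
`y q` and `y p` would give such a pair with a smaller gap. -/
lemma exists_adjacent_inversion {m : ℕ} {x y : Perm (Fin m)} (h : lLE x y) (hne : x ≠ y) :
    ∃ p q, p < q ∧ x p < x q ∧ (y q : ℕ) + 1 = y p := by
  set D := {pq : Fin m × Fin m | pq.1 < pq.2 ∧ y pq.2 < y pq.1 ∧ x pq.1 < x pq.2}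
  have hD : D.Nonempty := by
    obtain ⟨⟨p, q⟩, ⟨hpq, hy⟩, hx⟩ :=
      Set.exists_of_ssubset (h.ssubset_of_ne (InvL_injective.ne hne))
    exact ⟨(p, q), hpq, hy,
      lt_of_le_of_ne (not_lt.mp fun hx' => hx ⟨hpq, hx'⟩) (x.injective.ne hpq.ne)⟩
  obtain ⟨⟨p, q⟩, hmem, hmin⟩ :=
    D.exists_min_image (fun pq => (y pq.1 : ℕ) - y pq.2) D.toFinite hD
  obtain ⟨hpq, hy, hx⟩ : p < q ∧ y q < y p ∧ x p < x q := hmem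
  refine ⟨p, q, hpq, hx, ?_⟩
  by_contra hgap
  rw [Fin.lt_def] at hy
  obtain ⟨r, hr⟩ : ∃ r, (y r : ℕ) = y q + 1 := ⟨y⁻¹ ⟨y q + 1, by omega⟩, by simp⟩
  have hyrq : y q < y r := Fin.lt_def.mpr (by omega)
  have hyrp : y r < y p := Fin.lt_def.mpr (by omega)
  have hrq : r ≠ q := by rintro rfl; omega
  have not_mem_pr : p < r ∧ x p < x r → False := fun hpr => by
    have := hmin (p, r) ⟨hpr.1, hyrp, hpr.2⟩
    simp only at this
    omega
  rcases hrq.lt_or_gt with hrq | hqr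
  · rcases (x.injective.ne hrq.ne).lt_or_gt with hxr | hxr
    · have := hmin (r, q) ⟨hrq, hyrq, hxr⟩
      simp only at this
      omega
    · refine not_mem_pr ⟨?_, hx.trans hxr⟩
      by_contra hpr
      have hrp : r < p := lt_of_le_of_ne (not_lt.mp hpr) (by rintro rfl; omega)
      exact (apply_lt_apply_of_lLE h hrp hyrp).not_gt (hx.trans hxr)
  · exact not_mem_pr ⟨hpq.trans hqr, hx.trans (apply_lt_apply_of_lLE h hqr hyrq)⟩

lemma exists_sgen_mul_eq_of_lLE {n : ℕ} {x y : Perm (Fin (n + 1))} (h : lLE x y) (hne : x ≠ y) :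
    ∃ (j : Fin n) (w : Perm (Fin (n + 1))), j ∉ DesL w ∧ sgen j * w = y ∧ lLE x w := by
  obtain ⟨p, q, hpq, hx, hyy⟩ := exists_adjacent_inversion h hne
  let j : Fin n := ⟨y q, by have := (y p).isLt; omega⟩
  have hq : y q = j.castSucc := rfl
  have hp : y p = j.succ := Fin.ext hyy.symm
  have hInv : InvL y = insert (p, q) (InvL (sgen j * y)) := by
    simpa [sgen_mul_sgen_mul] using
      InvL_sgen_mul (x := sgen j * y) (j := j) hpq (by simp [hp, sgen]) (by simp [hq, sgen])
  refine ⟨j, sgen j * y, ?_, sgen_mul_sgen_mul j y, ?_⟩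
  · rw [notMem_DesL_iff, sgen_mul_inv_apply, sgen_mul_inv_apply, sgen_apply_castSucc,
      sgen_apply_succ, ← hp, ← hq]
    simpa using hpq
  · intro z hz
    rcases (hInv ▸ h hz : z ∈ insert (p, q) _) with rfl | hz'
    · exact absurd hz.2 hx.not_gt
    · exact hz'

section IntervalIso

variable {n : ℕ} {σ₁ ρ₁ σ₂ ρ₂ : Perm (Fin (n + 1))} {f : Perm (Fin (n + 1)) → Perm (Fin (n + 1))}

lemma map_bot_of_bijOn (h₁ : lLE σ₁ ρ₁) (hbij : Set.BijOn f (lInterval σ₁ ρ₁) (lInterval σ₂ ρ₂))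
    (hord : ∀ x ∈ lInterval σ₁ ρ₁, ∀ y ∈ lInterval σ₁ ρ₁, (lLE x y ↔ lLE (f x) (f y))) :
    f σ₁ = σ₂ := by
  have hσ₁ : σ₁ ∈ lInterval σ₁ ρ₁ := ⟨lLE_refl _, h₁⟩
  obtain ⟨hσ₂, hρ₂⟩ := hbij.mapsTo hσ₁
  obtain ⟨z, hz, hfz⟩ := hbij.surjOn ⟨lLE_refl σ₂, lLE_trans hσ₂ hρ₂⟩
  exact lLE_antisymm (hfz ▸ (hord σ₁ hσ₁ z hz).mp hz.1) hσ₂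

lemma map_top_of_bijOn (h₁ : lLE σ₁ ρ₁) (hbij : Set.BijOn f (lInterval σ₁ ρ₁) (lInterval σ₂ ρ₂))
    (hord : ∀ x ∈ lInterval σ₁ ρ₁, ∀ y ∈ lInterval σ₁ ρ₁, (lLE x y ↔ lLE (f x) (f y))) :
    f ρ₁ = ρ₂ := by
  have hρ₁ : ρ₁ ∈ lInterval σ₁ ρ₁ := ⟨h₁, lLE_refl _⟩
  obtain ⟨hσ₂, hρ₂⟩ := hbij.mapsTo hρ₁
  obtain ⟨z, hz, hfz⟩ := hbij.surjOn ⟨lLE_trans hσ₂ hρ₂, lLE_refl ρ₂⟩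
  exact lLE_antisymm hρ₂ (hfz ▸ (hord z hz ρ₁ hρ₁).mp hz.2)

lemma map_sgen_mul (hbij : Set.BijOn f (lInterval σ₁ ρ₁) (lInterval σ₂ ρ₂))
    (hord : ∀ x ∈ lInterval σ₁ ρ₁, ∀ y ∈ lInterval σ₁ ρ₁, (lLE x y ↔ lLE (f x) (f y)))
    (hdes : ∀ x ∈ lInterval σ₁ ρ₁, DesL (f x) = DesL x)
    {w : Perm (Fin (n + 1))} {j : Fin n} (hw : w ∈ lInterval σ₁ ρ₁)
    (hjw : sgen j * w ∈ lInterval σ₁ ρ₁) (hj : j ∉ DesL w) :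
    f (sgen j * w) = sgen j * f w := by
  have hlen := len_sgen_mul (notMem_DesL_iff.mp hj)
  have hne : f w ≠ f (sgen j * w) := fun h => by
    have := congrArg len (hbij.injOn hw hjw h)
    omega
  obtain ⟨k, v, hk, hkv, hv⟩ :=
    exists_sgen_mul_eq_of_lLE ((hord w hw _ hjw).mp (lLE_sgen_mul hj)) hne
  -- `f w ⋖ f (s_j w)`, since `f` reflects the order and `w ⋖ s_j w`
  have hvf : v = f w := by
    have hvJ : v ∈ lInterval σ₂ ρ₂ :=
      ⟨lLE_trans (hbij.mapsTo hw).1 hv,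
        lLE_trans (lLE_sgen_mul hk) (hkv ▸ (hbij.mapsTo hjw).2)⟩
    obtain ⟨z, hz, rfl⟩ := hbij.surjOn hvJ
    rcases eq_or_eq_of_lLE_of_len_eq_succ ((hord w hw z hz).mpr hv)
      ((hord z hz _ hjw).mpr (hkv ▸ lLE_sgen_mul hk)) hlen with rfl | rfl
    · rfl
    · have := len_sgen_mul (notMem_DesL_iff.mp hk)
      rw [hkv] at this
      omega
  subst hvf
  have hjk : j = k := by
    refine eq_of_mem_DesL_sgen_mul hk ?_ (hdes w hw ▸ hj)
    rw [hkv, hdes _ hjw]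
    exact mem_DesL_sgen_mul hj
  rw [← hkv, hjk]

lemma map_eq_mul_map_bot (hbij : Set.BijOn f (lInterval σ₁ ρ₁) (lInterval σ₂ ρ₂))
    (hord : ∀ x ∈ lInterval σ₁ ρ₁, ∀ y ∈ lInterval σ₁ ρ₁, (lLE x y ↔ lLE (f x) (f y)))
    (hdes : ∀ x ∈ lInterval σ₁ ρ₁, DesL (f x) = DesL x)
    {γ : Perm (Fin (n + 1))} (hγ : γ ∈ lInterval σ₁ ρ₁) :
    f γ = γ * σ₁⁻¹ * f σ₁ := by
  obtain rfl | hne := eq_or_ne σ₁ γ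
  · group
  obtain ⟨j, w, hj, hwγ, hw⟩ := exists_sgen_mul_eq_of_lLE hγ.1 hne
  have hlen : len w < len γ := by
    rw [← hwγ, len_sgen_mul (notMem_DesL_iff.mp hj)]
    omega
  subst hwγ
  have hwI : w ∈ lInterval σ₁ ρ₁ := ⟨hw, lLE_trans (lLE_sgen_mul hj) hγ.2⟩
  rw [map_sgen_mul hbij hord hdes hwI hγ hj, map_eq_mul_map_bot hbij hord hdes hwI]
  group
termination_by len γ

end IntervalIso

theorem xi_well_defined_general {n : ℕ}
    (σ₁ ρ₁ σ₂ ρ₂ : Equiv.Perm (Fin (n + 1))) (h₁ : lLE σ₁ ρ₁)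
    (f : Equiv.Perm (Fin (n + 1)) → Equiv.Perm (Fin (n + 1)))
    (hbij : Set.BijOn f (lInterval σ₁ ρ₁) (lInterval σ₂ ρ₂))
    (hord : ∀ x ∈ lInterval σ₁ ρ₁, ∀ y ∈ lInterval σ₁ ρ₁, (lLE x y ↔ lLE (f x) (f y)))
    (hdes : ∀ x ∈ lInterval σ₁ ρ₁, DesL (f x) = DesL x) :
    ρ₁ * σ₁⁻¹ = ρ₂ * σ₂⁻¹ := by
  rw [← map_top_of_bijOn h₁ hbij hord, ← map_bot_of_bijOn h₁ hbij hord,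
    map_eq_mul_map_bot hbij hord hdes ⟨h₁, lLE_refl ρ₁⟩]
  group

/-- If two left weak Bruhat intervals `[σ₁,ρ₁]_L` and `[σ₂,ρ₂]_L` are related by a
descent-preserving poset isomorphism (i.e. lie in the same equivalence class `C`),
then `ρ₁σ₁⁻¹ = ρ₂σ₂⁻¹`; so `ξ_C` is well defined. -/
theorem xi_well_defined {n : ℕ}
    (σ₁ ρ₁ σ₂ ρ₂ : Equiv.Perm (Fin (n + 1))) (h₁ : lLE σ₁ ρ₁) (h₂ : lLE σ₂ ρ₂)
    (f : Equiv.Perm (Fin (n + 1)) → Equiv.Perm (Fin (n + 1)))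
    (hbij : Set.BijOn f (lInterval σ₁ ρ₁) (lInterval σ₂ ρ₂))
    (hord : ∀ x ∈ lInterval σ₁ ρ₁, ∀ y ∈ lInterval σ₁ ρ₁, (lLE x y ↔ lLE (f x) (f y)))
    (hdes : ∀ x ∈ lInterval σ₁ ρ₁, DesL (f x) = DesL x) :
    ρ₁ * σ₁⁻¹ = ρ₂ * σ₂⁻¹ :=
  xi_well_defined_general σ₁ ρ₁ σ₂ ρ₂ h₁ f hbij hord hdes
end

section
/- Let P be a regular Schur labeled skew shape poset on {1,…,n} with τ_P of skew shape λ/μ. Then the set Σ_L(P) of linear extensions of P (viewed as permutations σ with σ(i) ≤ σ(j) whenever i ≤_P j) equals the left weak Bruhat interval [read_{τ_P}(T_{λ/μ}), read_{τ_P}(T'_{λ/μ})]_L, where T_{λ/μ} is the standard Young tableau filling 1,…,n row by row from the top (left to right in each row), and T'_{λ/μ} is the standard Young tableau filling 1,…,n column by column from the leftmost column (top to bottom in each column). -/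
/-- A skew partition `λ/μ`: a pair of Young diagrams with `μ ⊆ λ`. -/
structure SkewShape where
  outer : YoungDiagram
  inner : YoungDiagram
  le : inner ≤ outer

/-- The cells of the skew diagram `λ/μ` (pairs `(row, column)`). -/
def SkewShape.cells (s : SkewShape) : Finset (ℕ × ℕ) := s.outer.cells \ s.inner.cells

/-- A bijective tableau of shape `λ/μ` of size `n`: a filling of the cells with the
`n` distinct entries of `Fin n`. -/
def IsBijFilling (s : SkewShape) (n : ℕ) (τ : ℕ × ℕ → Fin n) : Prop :=
  Set.BijOn τ ↑s.cells Set.univ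

/-- A standard Young tableau of shape `λ/μ`: a bijective filling whose rows increase
left to right and whose columns increase top to bottom. -/
def IsSYT (s : SkewShape) (n : ℕ) (T : ℕ × ℕ → Fin n) : Prop :=
  IsBijFilling s n T ∧
  (∀ i j, (i, j) ∈ s.cells → (i, j + 1) ∈ s.cells → T (i, j) < T (i, j + 1)) ∧
  (∀ i j, (i, j) ∈ s.cells → (i + 1, j) ∈ s.cells → T (i, j) < T (i + 1, j))

/-- A Schur labeling: a bijective filling whose rows strictly decrease left to right
and whose columns strictly increase top to bottom. -/
def IsSchurLabeling (s : SkewShape) (n : ℕ) (τ : ℕ × ℕ → Fin n) : Prop :=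
  IsBijFilling s n τ ∧
  (∀ i j, (i, j) ∈ s.cells → (i, j + 1) ∈ s.cells → τ (i, j + 1) < τ (i, j)) ∧
  (∀ i j, (i, j) ∈ s.cells → (i + 1, j) ∈ s.cells → τ (i, j) < τ (i + 1, j))

/-- A distinguished Schur labeling: `τ_B ≥ τ_{B'}` whenever `B` is weakly below and
weakly left of `B'`. -/
def IsDistinguished (s : SkewShape) (n : ℕ) (τ : ℕ × ℕ → Fin n) : Prop :=
  IsSchurLabeling s n τ ∧
  ∀ B ∈ s.cells, ∀ B' ∈ s.cells, B'.1 ≤ B.1 → B.2 ≤ B'.2 → τ B' ≤ τ B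

/-- `π = read_τ(T)`, i.e. `π(τ(B)) = T(B)` for every box `B`; since `τ` is a bijective
filling this determines `π` completely. -/
def IsReading (s : SkewShape) {n : ℕ} (τ T : ℕ × ℕ → Fin n) (π : Equiv.Perm (Fin n)) : Prop :=
  ∀ B ∈ s.cells, π (τ B) = T B

/-- The poset `poset(τ)` on labels: `x ≤ y` iff the box of `x` is weakly upper-left of
the box of `y`. -/
def posetRel (s : SkewShape) {n : ℕ} (τ : ℕ × ℕ → Fin n) (x y : Fin n) : Prop :=
  ∃ B ∈ s.cells, ∃ B' ∈ s.cells, τ B = x ∧ τ B' = y ∧ B.1 ≤ B'.1 ∧ B.2 ≤ B'.2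

/-- `τ` is the Schur labeling `τ₀`, filling `1,…,n` right-to-left along rows starting
with the top row: characterized by its bijectivity together with the induced order of
the boxes. -/
def IsTau0 (s : SkewShape) (n : ℕ) (τ : ℕ × ℕ → Fin n) : Prop :=
  IsBijFilling s n τ ∧
  ∀ B ∈ s.cells, ∀ B' ∈ s.cells, B ≠ B' →
    (τ B < τ B' ↔ (B.1 < B'.1 ∨ (B.1 = B'.1 ∧ B'.2 < B.2)))

/-- `τ` is the Schur labeling `τ₁`, filling `1,…,n` top-to-bottom along columns starting
with the rightmost column. -/
def IsTau1 (s : SkewShape) (n : ℕ) (τ : ℕ × ℕ → Fin n) : Prop :=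
  IsBijFilling s n τ ∧
  ∀ B ∈ s.cells, ∀ B' ∈ s.cells, B ≠ B' →
    (τ B < τ B' ↔ (B'.2 < B.2 ∨ (B.2 = B'.2 ∧ B.1 < B'.1)))

/-- `T` is the standard Young tableau `T_{λ/μ}`, filling `1,…,n` row by row from the
top, left to right in each row. -/
def IsRowTab (s : SkewShape) (n : ℕ) (T : ℕ × ℕ → Fin n) : Prop :=
  IsBijFilling s n T ∧
  ∀ B ∈ s.cells, ∀ B' ∈ s.cells, B ≠ B' →
    (T B < T B' ↔ (B.1 < B'.1 ∨ (B.1 = B'.1 ∧ B.2 < B'.2)))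

/-- `T` is the standard Young tableau `T'_{λ/μ}`, filling `1,…,n` column by column from
the leftmost column, top to bottom in each column. -/
def IsColTab (s : SkewShape) (n : ℕ) (T : ℕ × ℕ → Fin n) : Prop :=
  IsBijFilling s n T ∧
  ∀ B ∈ s.cells, ∀ B' ∈ s.cells, B ≠ B' →
    (T B < T B' ↔ (B.2 < B'.2 ∨ (B.2 = B'.2 ∧ B.1 < B'.1)))

/-- Two boxes are adjacent (share an edge). -/
def AdjBox (B B' : ℕ × ℕ) : Prop :=
  (B.1 = B'.1 ∧ (B.2 + 1 = B'.2 ∨ B'.2 + 1 = B.2)) ∨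
  (B.2 = B'.2 ∧ (B.1 + 1 = B'.1 ∨ B'.1 + 1 = B.1))

/-- Two boxes lie in the same connected component of the skew diagram. -/
def SameComp (s : SkewShape) (B B' : ℕ × ℕ) : Prop :=
  Relation.ReflTransGen (fun x y => x ∈ s.cells ∧ y ∈ s.cells ∧ AdjBox x y) B B'

/-- The skew diagram is basic: it contains no empty rows and no empty columns. -/
def IsBasic (s : SkewShape) : Prop :=
  (∀ i i' : ℕ, i ≤ i' → (∃ j, (i', j) ∈ s.cells) → ∃ j, (i, j) ∈ s.cells) ∧
  (∀ j j' : ℕ, j ≤ j' → (∃ i, (i, j') ∈ s.cells) → ∃ i, (i, j) ∈ s.cells)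

/-- Condition (iii) in the definition of the canonical Schur labeling `τ_P`: the minimal
entries of the connected components, ordered from the top, increase. -/
def CompMinCond (s : SkewShape) {n : ℕ} (τ : ℕ × ℕ → Fin n) : Prop :=
  ∀ B ∈ s.cells, ∀ B' ∈ s.cells, ¬ SameComp s B B' → B.1 < B'.1 →
    ∃ B₀ ∈ s.cells, SameComp s B B₀ ∧ ∀ B₁ ∈ s.cells, SameComp s B' B₁ → τ B₀ < τ B₁

/-- A binary relation on `{1,…,n}` is regular if for all `x ≤_P z` and `y` between `x`
and `z` as integers, `x ≤_P y` or `y ≤_P z`. -/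
def RegularRel {n : ℕ} (r : Fin n → Fin n → Prop) : Prop :=
  ∀ x y z : Fin n, r x z → ((x < y ∧ y < z) ∨ (z < y ∧ y < x)) → r x y ∨ r y z

/-!
A distinguished Schur labeling `τ` makes the two readings extremal: for labels `x < y`,
`(x, y)` is an inversion of `read_τ(T_{λ/μ})` exactly when `y ≤_P x`, and an inversion of
`read_τ(T'_{λ/μ})` exactly when `x ≰_P y`. Since a permutation is a linear extension of `P`
iff its inversion set lies between these two sets, `Σ_L(P)` is the interval.

It remains to see that the canonical labeling is distinguished, i.e. `τ B' ≤ τ B` whenever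
`B'` is weakly north-east of `B`. Inside one connected component this follows from the row
and column monotonicity of `τ`, walking from `B'` down to `B` one row at a time through a
vertical edge. Across components, regularity makes the label set of each component an
integer interval, and condition (iii) orders these intervals from the top.
-/

namespace SkewShape

variable (s : SkewShape)

theorem mem_cells_iff {B : ℕ × ℕ} : B ∈ s.cells ↔ B ∈ s.outer ∧ B ∉ s.inner := by
  rw [SkewShape.cells, Finset.mem_sdiff, YoungDiagram.mem_cells, YoungDiagram.mem_cells]

variable {s}

theorem mem_cells_of_le_of_le {B C D : ℕ × ℕ} (hB : B ∈ s.cells) (hD : D ∈ s.cells)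
    (hBC : B ≤ C) (hCD : C ≤ D) : C ∈ s.cells := by
  rw [mem_cells_iff] at hB hD ⊢
  exact ⟨s.outer.isLowerSet hCD hD.1, fun hC => hB.2 (s.inner.isLowerSet hBC hC)⟩

end SkewShape

open SkewShape

section SameComp

variable {s : SkewShape}

theorem SameComp.symm {B B' : ℕ × ℕ} (h : SameComp s B B') : SameComp s B' B := by
  induction h with
  | refl => exact .refl
  | tail _ hstep ih =>
    obtain ⟨hb, hc, hadj⟩ := hstep
    exact ih.head ⟨hc, hb, by unfold AdjBox at hadj ⊢; omega⟩

theorem sameComp_of_le {B D : ℕ × ℕ} (hB : B ∈ s.cells) (hD : D ∈ s.cells) (h : B ≤ D) :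
    SameComp s B D := by
  induction hk : D.1 - B.1 + (D.2 - B.2) generalizing B with
  | zero =>
    rw [le_antisymm h (Prod.mk_le_mk.2 (by omega))]
    exact .refl
  | succ k ih =>
    obtain ⟨E, hBE, hED, hadj, hEk⟩ : ∃ E : ℕ × ℕ, B ≤ E ∧ E ≤ D ∧ AdjBox B E ∧
        D.1 - E.1 + (D.2 - E.2) = k := by
      obtain ⟨h1, h2⟩ := Prod.mk_le_mk.1 h
      rcases h2.lt_or_eq with h2 | h2
      · exact ⟨(B.1, B.2 + 1), Prod.mk_le_mk.2 (by omega), Prod.mk_le_mk.2 (by omega),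
          Or.inl ⟨rfl, Or.inl rfl⟩, by omega⟩
      · exact ⟨(B.1 + 1, B.2), Prod.mk_le_mk.2 (by omega), Prod.mk_le_mk.2 (by omega),
          Or.inr ⟨rfl, Or.inl rfl⟩, by omega⟩
    have hE := mem_cells_of_le_of_le hB hD hBE hED
    exact .head ⟨hB, hE, hadj⟩ (ih hE hED hEk)

theorem SameComp.exists_vertical_edge {B B' : ℕ × ℕ} (h : SameComp s B B') {i : ℕ}
    (h1 : B'.1 ≤ i) (h2 : i < B.1) : ∃ j, (i, j) ∈ s.cells ∧ (i + 1, j) ∈ s.cells := by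
  induction h using Relation.ReflTransGen.head_induction_on with
  | refl => omega
  | @head a c hstep _ ih =>
    obtain ⟨ha, hc, hadj⟩ := hstep
    by_cases hic : i < c.1
    · exact ih hic
    · obtain ⟨hc1, ha1, ha2⟩ : c.1 = i ∧ a.1 = i + 1 ∧ a.2 = c.2 := by
        unfold AdjBox at hadj; omega
      refine ⟨c.2, ?_, ?_⟩
      · rwa [show (i, c.2) = c from Prod.ext hc1.symm rfl]
      · rwa [show (i + 1, c.2) = a from Prod.ext ha1.symm ha2.symm]

end SameComp

theorem posetRel_iff {s : SkewShape} {n : ℕ} {τ : ℕ × ℕ → Fin n} (hτ : Set.InjOn τ s.cells)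
    {B B' : ℕ × ℕ} (hB : B ∈ s.cells) (hB' : B' ∈ s.cells) :
    posetRel s τ (τ B) (τ B') ↔ B ≤ B' := by
  constructor
  · rintro ⟨C, hC, C', hC', hCB, hCB', h1, h2⟩
    rw [← hτ hC hB hCB, ← hτ hC' hB' hCB']
    exact Prod.mk_le_mk.2 ⟨h1, h2⟩
  · exact fun h => ⟨B, hB, B', hB', rfl, rfl, h.1, h.2⟩

-- Regularity makes the labels of a connected component an interval of integers.
theorem SameComp.of_lt_of_lt {s : SkewShape} {n : ℕ} {τ : ℕ × ℕ → Fin n}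
    (hτ : Set.InjOn τ s.cells) (hreg : RegularRel (posetRel s τ)) {B B₁ C : ℕ × ℕ}
    (h : SameComp s B B₁) (hC : C ∈ s.cells) (h1 : τ B < τ C) (h2 : τ C < τ B₁) :
    SameComp s B C := by
  have hrel {D E : ℕ × ℕ} (hD : D ∈ s.cells) (hE : E ∈ s.cells)
      (h : posetRel s τ (τ D) (τ E)) : SameComp s D E :=
    sameComp_of_le hD hE ((posetRel_iff hτ hD hE).1 h)
  induction h using Relation.ReflTransGen.head_induction_on with
  | refl => exact absurd (h1.trans h2) (lt_irrefl _)
  | @head a c hstep _ ih =>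
    obtain ⟨ha, hc, hadj⟩ := hstep
    have hac : SameComp s a c := .single ⟨ha, hc, hadj⟩
    rcases lt_trichotomy (τ C) (τ c) with hlt | heq | hgt
    · have hcomp : a ≤ c ∨ c ≤ a := by
        unfold AdjBox at hadj; rw [Prod.le_def, Prod.le_def]; omega
      rcases hcomp with hle | hle
      · rcases hreg _ _ _ ((posetRel_iff hτ ha hc).2 hle) (Or.inl ⟨h1, hlt⟩) with hp | hp
        exacts [hrel ha hC hp, hac.trans (hrel hC hc hp).symm]
      · rcases hreg _ _ _ ((posetRel_iff hτ hc ha).2 hle) (Or.inr ⟨h1, hlt⟩) with hp | hp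
        exacts [hac.trans (hrel hc hC hp), (hrel hC ha hp).symm]
    · rwa [hτ hC hc heq]
    · exact hac.trans (ih hgt)

namespace IsSchurLabeling

variable {s : SkewShape} {n : ℕ} {τ : ℕ × ℕ → Fin n}

theorem row_anti (hτ : IsSchurLabeling s n τ) {a b c : ℕ} (hb : (a, b) ∈ s.cells)
    (hc : (a, c) ∈ s.cells) (h : b ≤ c) : τ (a, c) ≤ τ (a, b) := by
  induction c, h using Nat.le_induction with
  | base => exact le_rfl
  | succ c hbc ih =>
    have hc' : (a, c) ∈ s.cells := mem_cells_of_le_of_le hb hc ⟨le_rfl, hbc⟩ ⟨le_rfl, c.le_succ⟩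
    exact (hτ.2.1 a c hc' hc).le.trans (ih hc')

theorem le_of_sameComp (hτ : IsSchurLabeling s n τ) {B B' : ℕ × ℕ} (hB : B ∈ s.cells)
    (hB' : B' ∈ s.cells) (hc : SameComp s B' B) (h1 : B'.1 ≤ B.1) (h2 : B.2 ≤ B'.2) :
    τ B' ≤ τ B := by
  obtain ⟨r, c⟩ := B
  induction r using Nat.strong_induction_on generalizing c with
  | _ r ih =>
  simp only at h1 h2
  rcases h1.eq_or_lt with h1 | h1
  · obtain ⟨r', c'⟩ := B'
    simp only at h1 h2
    subst h1
    exact hτ.row_anti hB hB' h2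
  obtain ⟨r, rfl⟩ : ∃ r₀, r = r₀ + 1 := ⟨r - 1, by omega⟩
  obtain ⟨j, hj, hj'⟩ := hc.symm.exists_vertical_edge (i := r) (by omega) (by simp)
  -- clamp the column of the vertical edge into `[c, B'.2]`
  set m := max c (min j B'.2)
  have hm : (r, m) ∈ s.cells := by
    obtain ⟨X, hX, hXm⟩ : ∃ X ∈ s.cells, X ≤ (r, m) := by
      rcases (by omega : j ≤ m ∨ B'.2 ≤ m) with hl | hl
      exacts [⟨_, hj, le_rfl, hl⟩, ⟨B', hB', by omega, hl⟩]
    obtain ⟨Y, hY, hmY⟩ : ∃ Y ∈ s.cells, (r, m) ≤ Y := by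
      rcases (by omega : m ≤ c ∨ m ≤ j) with hu | hu
      exacts [⟨_, hB, r.le_succ, hu⟩, ⟨_, hj, le_rfl, hu⟩]
    exact mem_cells_of_le_of_le hX hY hXm hmY
  have hm' : (r + 1, m) ∈ s.cells := by
    rcases (by omega : m ≤ c ∨ m ≤ j) with hu | hu
    exacts [mem_cells_of_le_of_le hB hB ⟨le_rfl, le_max_left _ _⟩ ⟨le_rfl, hu⟩,
      mem_cells_of_le_of_le hB hj' ⟨le_rfl, le_max_left _ _⟩ ⟨le_rfl, hu⟩]
  have hcm : SameComp s B' (r, m) :=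
    (hc.trans (sameComp_of_le hB hm' ⟨le_rfl, le_max_left _ _⟩)).tail
      ⟨hm', hm, Or.inr ⟨rfl, Or.inr rfl⟩⟩
  apply le_of_lt
  calc τ B' ≤ τ (r, m) := ih r r.lt_succ_self m hm hcm (by simp; omega) (by simp; omega)
    _ < τ (r + 1, m) := hτ.2.2 r m hm hm'
    _ ≤ τ (r + 1, c) := hτ.row_anti hB hm' (le_max_left _ _)

theorem isDistinguished (hτ : IsSchurLabeling s n τ) (hmin : CompMinCond s τ)
    (hreg : RegularRel (posetRel s τ)) : IsDistinguished s n τ := by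
  refine ⟨hτ, fun B hB B' hB' h1 h2 => ?_⟩
  by_cases hc : SameComp s B' B
  · exact hτ.le_of_sameComp hB hB' hc h1 h2
  have hrow : B'.1 < B.1 :=
    h1.lt_of_ne fun he => hc (sameComp_of_le hB hB' ⟨he.ge, h2⟩).symm
  obtain ⟨B₀, -, hB₀, hB₀min⟩ := hmin B' hB' B hB hc hrow
  by_contra! hlt
  exact hc (hB₀.trans (hB₀.symm.of_lt_of_lt hτ.1.injOn hreg hB (hB₀min B hB .refl) hlt))

end IsSchurLabeling
theorem forall_rel_le_iff_invL {n : ℕ} (r : Fin n → Fin n → Prop) (σ : Equiv.Perm (Fin n)) :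
    (∀ x y, r x y → σ x ≤ σ y) ↔
      {p : Fin n × Fin n | p.1 < p.2 ∧ r p.2 p.1} ⊆ InvL σ ∧
        InvL σ ⊆ {p | p.1 < p.2 ∧ ¬ r p.1 p.2} := by
  constructor
  · intro h
    exact ⟨fun p ⟨hp, hr⟩ => ⟨hp, (h _ _ hr).lt_of_ne (σ.injective.ne hp.ne')⟩,
      fun p ⟨hp, hσ⟩ => ⟨hp, fun hr => (h _ _ hr).not_gt hσ⟩⟩
  · rintro ⟨hlo, hhi⟩ x y hr
    rcases lt_trichotomy x y with hxy | rfl | hxy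
    · exact not_lt.1 fun hσ => (hhi (show (x, y) ∈ InvL σ from ⟨hxy, hσ⟩)).2 hr
    · exact le_rfl
    · exact (hlo (show (y, x) ∈ _ from ⟨hxy, hr⟩)).2.le

section Reading

variable {s : SkewShape} {n : ℕ} {τ T : ℕ × ℕ → Fin n} {π : Equiv.Perm (Fin n)}

theorem mem_invL_reading_iff (hπ : IsReading s τ T π) {B B' : ℕ × ℕ} (hB : B ∈ s.cells)
    (hB' : B' ∈ s.cells) : (τ B, τ B') ∈ InvL π ↔ τ B < τ B' ∧ T B' < T B := by
  simp only [InvL, Set.mem_ofPred_eq, hπ B hB, hπ B' hB']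

theorem IsBijFilling.pairSet_ext (hτ : IsBijFilling s n τ) {S S' : Set (Fin n × Fin n)}
    (h : ∀ B ∈ s.cells, ∀ B' ∈ s.cells, (τ B, τ B') ∈ S ↔ (τ B, τ B') ∈ S') : S = S' := by
  ext ⟨x, y⟩
  obtain ⟨B, hB, rfl⟩ := hτ.surjOn (Set.mem_univ x)
  obtain ⟨B', hB', rfl⟩ := hτ.surjOn (Set.mem_univ y)
  exact h B hB B' hB'

theorem IsDistinguished.not_northeast_of_lt (hτ : IsDistinguished s n τ) {B B' : ℕ × ℕ}
    (hB : B ∈ s.cells) (hB' : B' ∈ s.cells) (hlt : τ B < τ B') :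
    ¬ (B'.1 ≤ B.1 ∧ B.2 ≤ B'.2) :=
  fun h => (hτ.2 B hB B' hB' h.1 h.2).not_gt hlt

theorem invL_eq_of_isRowTab (hτ : IsDistinguished s n τ) (hT : IsRowTab s n T)
    (hπ : IsReading s τ T π) : InvL π = {p | p.1 < p.2 ∧ posetRel s τ p.2 p.1} := by
  refine hτ.1.1.pairSet_ext fun B hB B' hB' => ?_
  rw [mem_invL_reading_iff hπ hB hB', Set.mem_ofPred_eq, posetRel_iff hτ.1.1.injOn hB' hB,
    Prod.le_def]
  refine and_congr_right fun hlt => ?_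
  have hNE := hτ.not_northeast_of_lt hB hB' hlt
  rw [hT.2 B' hB' B hB fun h => hNE (h ▸ ⟨le_rfl, le_rfl⟩)]
  omega

theorem invL_eq_of_isColTab (hτ : IsDistinguished s n τ) (hT : IsColTab s n T)
    (hπ : IsReading s τ T π) : InvL π = {p | p.1 < p.2 ∧ ¬ posetRel s τ p.1 p.2} := by
  refine hτ.1.1.pairSet_ext fun B hB B' hB' => ?_
  rw [mem_invL_reading_iff hπ hB hB', Set.mem_ofPred_eq, posetRel_iff hτ.1.1.injOn hB hB',
    Prod.le_def]
  refine and_congr_right fun hlt => ?_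
  have hNE := hτ.not_northeast_of_lt hB hB' hlt
  rw [hT.2 B' hB' B hB fun h => hNE (h ▸ ⟨le_rfl, le_rfl⟩)]
  omega

end Reading

theorem sigmaL_eq_left_interval_general (s : SkewShape) (n : ℕ) (τ : ℕ × ℕ → Fin n)
    (hschur : IsSchurLabeling s n τ) (hmin : CompMinCond s τ)
    (hreg : RegularRel (posetRel s τ))
    (T T' : ℕ × ℕ → Fin n) (hT : IsRowTab s n T) (hT' : IsColTab s n T')
    (πmin πmax : Equiv.Perm (Fin n))
    (hπmin : IsReading s τ T πmin) (hπmax : IsReading s τ T' πmax) :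
    {σ : Equiv.Perm (Fin n) | ∀ B ∈ s.cells, ∀ B' ∈ s.cells,
        B.1 ≤ B'.1 → B.2 ≤ B'.2 → σ (τ B) ≤ σ (τ B')} =
      {γ | lLE πmin γ ∧ lLE γ πmax} := by
  have hτ := hschur.isDistinguished hmin hreg
  ext σ
  rw [Set.mem_ofPred_eq, Set.mem_ofPred_eq, lLE, lLE, invL_eq_of_isRowTab hτ hT hπmin,
    invL_eq_of_isColTab hτ hT' hπmax, ← forall_rel_le_iff_invL]
  constructor
  · rintro h _ _ ⟨B, hB, B', hB', rfl, rfl, h1, h2⟩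
    exact h B hB B' hB' h1 h2
  · exact fun h B hB B' hB' h1 h2 => h _ _ ⟨B, hB, B', hB', rfl, rfl, h1, h2⟩

/-- For a regular Schur labeled skew shape poset `P` with canonical Schur labeling
`τ_P` of shape `λ/μ`, the set of linear extensions `Σ_L(P)` equals the left weak Bruhat
interval `[read_{τ_P}(T_{λ/μ}), read_{τ_P}(T'_{λ/μ})]_L`. -/
theorem sigmaL_eq_left_interval (s : SkewShape) (n : ℕ) (τ : ℕ × ℕ → Fin n)
    (hschur : IsSchurLabeling s n τ) (hbasic : IsBasic s) (hmin : CompMinCond s τ)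
    (hreg : RegularRel (posetRel s τ))
    (T T' : ℕ × ℕ → Fin n) (hT : IsRowTab s n T) (hT' : IsColTab s n T')
    (πmin πmax : Equiv.Perm (Fin n))
    (hπmin : IsReading s τ T πmin) (hπmax : IsReading s τ T' πmax) :
    {σ : Equiv.Perm (Fin n) | ∀ B ∈ s.cells, ∀ B' ∈ s.cells,
        B.1 ≤ B'.1 → B.2 ≤ B'.2 → σ (τ B) ≤ σ (τ B')} =
      {γ | lLE πmin γ ∧ lLE γ πmax} :=
  sigmaL_eq_left_interval_general s n τ hschur hmin hreg T T' hT hT' πmin πmax hπmin hπmax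
end
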